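/- arXiv:1703.05085 — 6 statements merged into one kernel-verified Lean document; each statement's English description precedes it below -/
import Mathlib

section
/- Let S, B ⊆ ℝ^n be compact sets, let f : ℝ^n → ℝ^n be continuous with f(S) ⊆ B, and let μ₁ be a finite positive Borel measure on ℝ^n vanishing outside B. Then there exists a finite positive Borel measure μ₀ vanishing outside S such that f_#μ₀ = μ₁ if and only if there is no continuous function v : ℝ^n → ℝ such that v(f(x)) ≥ 0 for all x ∈ S and ∫ v dμ₁ < 0. -/
/-!
If `μ₀` is carried by `S`, then `∫ v d(f_# μ₀) = ∫ v ∘ f dμ₀ ≥ 0`. Conversely, testing against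
`v = -min 1 (dist · (f '' S))` shows that `μ₁` is carried by the compact set `f '' S`; a Borel
section `g` of `f` over `f '' S` with values in `S`, obtained by the Kuratowski–Ryll-Nardzewski
selection argument along a dense sequence, then gives `μ₀ = g_# μ₁`.
-/

open MeasureTheory Metric Filter Topology

theorem measurable_sInf_setOf {α : Type*} [MeasurableSpace α] {p : α → ℕ → Prop}
    (hp : ∀ k, MeasurableSet {a | p a k}) : Measurable fun a => sInf {k | p a k} := by
  classical
  have hex : ∀ a, ∃ k, p a k ∨ ∀ i, ¬ p a i := fun a =>
    (em (∃ k, p a k)).elim (fun ⟨k, hk⟩ => ⟨k, .inl hk⟩) fun h => ⟨0, .inr (not_exists.1 h)⟩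
  have hfind : (fun a => sInf {k | p a k}) = fun a => Nat.find (hex a) := by
    funext a
    by_cases h : ∃ k, p a k
    · refine le_antisymm ?_ (Nat.find_min' _ (.inl (Nat.sInf_mem h)))
      exact (Nat.find_spec (hex a)).elim Nat.sInf_le fun h' => absurd h (not_exists.2 h')
    · simp only [not_exists] at h
      simpa [h] using ((Nat.find_eq_zero (hex a)).2 (.inr h)).symm
  rw [hfind]
  refine measurable_find hex fun k => ?_
  simp only [Set.ofPred_or, Set.ofPred_forall]
  exact (hp k).union (.iInter fun i => (hp i).compl)

namespace MeasurableSelection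

open TopologicalSpace

variable {X Y : Type*} [PseudoMetricSpace X]

def candidates (s : Set X) (x : ℕ → X) (k i : ℕ) : Set ℕ :=
  {j | (s ∩ closedBall (x j) ((1 / 2) ^ (k + 1))).Nonempty ∧ dist (x j) (x i) ≤ 2 * (1 / 2) ^ k}

/-- Stage `k` picks a point of the dense sequence within `2⁻ᵏ` of `F y`, at distance at most
`2 · 2⁻ᵏ` from the previous pick; when `F y = ∅` every stage picks `0` (as `sInf ∅ = 0`), so the
picks always form a Cauchy sequence. -/
noncomputable def index (F : Y → Set X) (x : ℕ → X) : ℕ → Y → ℕ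
  | 0, y => sInf {j | (F y ∩ closedBall (x j) 1).Nonempty}
  | k + 1, y => sInf (candidates (F y) x k (index F x k y))

variable {F : Y → Set X} {x : ℕ → X}

theorem measurable_index [MeasurableSpace Y]
    (hF : ∀ c r, MeasurableSet {y | (F y ∩ closedBall c r).Nonempty}) (k : ℕ) :
    Measurable (index F x k) := by
  induction k with
  | zero => exact measurable_sInf_setOf fun j => hF _ _
  | succ k ih =>
    exact measurable_sInf_setOf fun j =>
      (hF _ _).inter (ih (.of_discrete (s := {i | dist (x j) (x i) ≤ 2 * (1 / 2) ^ k})))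

theorem candidates_nonempty (hx : DenseRange x) {s : Set X} {k i : ℕ}
    (hs : (s ∩ closedBall (x i) ((1 / 2) ^ k)).Nonempty) : (candidates s x k i).Nonempty := by
  obtain ⟨z, hzs, hzi⟩ := hs
  obtain ⟨j, hj⟩ := hx.exists_dist_lt z (by positivity : (0 : ℝ) < (1 / 2) ^ (k + 1))
  refine ⟨j, ⟨z, hzs, mem_closedBall.2 (dist_comm z _ ▸ hj.le)⟩, ?_⟩
  calc dist (x j) (x i) ≤ dist (x j) z + dist z (x i) := dist_triangle _ _ _
    _ ≤ (1 / 2) ^ (k + 1) + (1 / 2) ^ k := add_le_add (dist_comm z _ ▸ hj.le) hzi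
    _ ≤ 2 * (1 / 2) ^ k := by rw [pow_succ]; linarith [pow_nonneg (by norm_num : (0 : ℝ) ≤ 1 / 2) k]

theorem inter_closedBall_index_nonempty (hx : DenseRange x) {y : Y} (hy : (F y).Nonempty) :
    ∀ k, (F y ∩ closedBall (x (index F x k y)) ((1 / 2) ^ k)).Nonempty
  | 0 => by
    obtain ⟨z, hz⟩ := hy
    obtain ⟨j, hj⟩ := hx.exists_dist_lt z one_pos
    rw [pow_zero]
    exact Nat.sInf_mem (s := {j | (F y ∩ closedBall (x j) 1).Nonempty})
      ⟨j, z, hz, mem_closedBall.2 (dist_comm z _ ▸ hj.le)⟩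
  | k + 1 => (Nat.sInf_mem (candidates_nonempty hx (inter_closedBall_index_nonempty hx hy k))).1

theorem dist_index_succ_le (hx : DenseRange x) (k : ℕ) (y : Y) :
    dist (x (index F x (k + 1) y)) (x (index F x k y)) ≤ 2 * (1 / 2) ^ k := by
  rcases (F y).eq_empty_or_nonempty with hy | hy
  · have hzero : ∀ k, index F x k y = 0 := by
      rintro (_ | _) <;> simp [index, candidates, hy]
    simp [hzero]
  · exact (Nat.sInf_mem (candidates_nonempty hx (inter_closedBall_index_nonempty hx hy k))).2

theorem exists_measurable_selection [CompleteSpace X] [SeparableSpace X] [Nonempty X]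
    [MeasurableSpace X] [BorelSpace X] [MeasurableSpace Y] {F : Y → Set X}
    (hF_closed : ∀ y, IsClosed (F y))
    (hF : ∀ c r, MeasurableSet {y | (F y ∩ closedBall c r).Nonempty}) :
    ∃ g : Y → X, Measurable g ∧ ∀ y, (F y).Nonempty → g y ∈ F y := by
  set x := denseSeq X
  have hx : DenseRange x := denseRange_denseSeq X
  have hcauchy (y : Y) : CauchySeq fun k => x (index F x k y) :=
    cauchySeq_of_le_geometric (1 / 2) 2 (by norm_num) fun k =>
      dist_comm (x (index F x k y)) _ ▸ dist_index_succ_le hx k y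
  choose g hg using fun y => cauchySeq_tendsto_of_complete (hcauchy y)
  refine ⟨g, measurable_of_tendsto_metrizable (fun k => measurable_from_nat.comp
    (measurable_index hF k)) (tendsto_pi_nhds.2 hg), fun y hy => ?_⟩
  rw [(hF_closed y).mem_iff_infDist_zero hy]
  have hdist : Tendsto (fun k => infDist (x (index F x k y)) (F y)) atTop (𝓝 0) := by
    refine squeeze_zero (fun _ => infDist_nonneg) (fun k => ?_)
      (tendsto_pow_atTop_nhds_zero_of_lt_one (by norm_num) (by norm_num : (1 / 2 : ℝ) < 1))
    obtain ⟨z, hzF, hz⟩ := inter_closedBall_index_nonempty hx hy k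
    exact (infDist_le_dist_of_mem hzF).trans (dist_comm z _ ▸ mem_closedBall.1 hz)
  exact tendsto_nhds_unique (((continuous_infDist_pt _).tendsto _).comp (hg y)) hdist

end MeasurableSelection

open MeasurableSelection

theorem IsCompact.exists_measurable_section {X Y : Type*} [MetricSpace X] [CompleteSpace X]
    [TopologicalSpace.SeparableSpace X] [Nonempty X] [MeasurableSpace X] [BorelSpace X]
    [TopologicalSpace Y] [T2Space Y] [MeasurableSpace Y] [OpensMeasurableSpace Y]
    {S : Set X} (hS : IsCompact S) {f : X → Y} (hf : Continuous f) :
    ∃ g : Y → X, Measurable g ∧ ∀ y ∈ f '' S, g y ∈ S ∧ f (g y) = y := by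
  have hfiber (c : X) (r : ℝ) :
      {y | (S ∩ f ⁻¹' {y} ∩ closedBall c r).Nonempty} = f '' (S ∩ closedBall c r) := by
    ext y
    constructor
    · rintro ⟨z, ⟨hzS, rfl⟩, hz⟩
      exact ⟨z, ⟨hzS, hz⟩, rfl⟩
    · rintro ⟨z, ⟨hzS, hz⟩, rfl⟩
      exact ⟨z, ⟨hzS, rfl⟩, hz⟩
  obtain ⟨g, hg, hgF⟩ := exists_measurable_selection (F := fun y => S ∩ f ⁻¹' {y})
    (fun y => hS.isClosed.inter (isClosed_singleton.preimage hf)) fun c r => by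
      rw [hfiber]
      exact ((hS.inter_right isClosed_closedBall).image hf).isClosed.measurableSet
  refine ⟨g, hg, fun y hy => hgF y ?_⟩
  obtain ⟨z, hzS, rfl⟩ := hy
  exact ⟨z, hzS, rfl⟩

theorem measure_compl_eq_zero_of_forall_integral_nonneg {X : Type*} [PseudoEMetricSpace X]
    [MeasurableSpace X] [OpensMeasurableSpace X] {μ : Measure X} [IsFiniteMeasure μ]
    {T : Set X} (hT : IsClosed T)
    (h : ∀ v : X → ℝ, Continuous v → (∀ y ∈ T, 0 ≤ v y) → 0 ≤ ∫ y, v y ∂μ) : μ Tᶜ = 0 := by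
  set d : X → ℝ := fun y => ENNReal.truncateToReal 1 (infEDist y T)
  have hd_cont : Continuous d :=
    (ENNReal.continuous_truncateToReal ENNReal.one_ne_top).comp continuous_infEDist
  have hd_nonneg (y : X) : 0 ≤ d y := ENNReal.truncateToReal_nonneg
  have hd_int : Integrable d μ :=
    .of_bound hd_cont.aestronglyMeasurable 1 (.of_forall fun y => by
      rw [Real.norm_of_nonneg (hd_nonneg y)]
      exact ENNReal.truncateToReal_le ENNReal.one_ne_top)
  have hd_zero : ∫ y, d y ∂μ = 0 := by
    refine le_antisymm ?_ (integral_nonneg hd_nonneg)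
    have := h (fun y => -d y) hd_cont.neg fun y hy => by
      simp [d, infEDist_zero_of_mem hy, ENNReal.truncateToReal]
    rwa [integral_neg, neg_nonneg] at this
  have hd_pos : Tᶜ ⊆ {y | d y ≠ 0} := fun y hy => by
    have : 0 < infEDist y T := by
      rwa [infEDist_pos_iff_notMem_closure, hT.closure_eq]
    exact (ENNReal.toReal_pos (by simpa using this.ne')
      (min_le_left _ _ |>.trans_lt ENNReal.one_lt_top).ne).ne'
  exact measure_mono_null hd_pos
    (ae_iff.1 ((integral_eq_zero_iff_of_nonneg hd_nonneg hd_int).1 hd_zero))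

theorem pullback_measure_iff_general (n : ℕ)
    (S : Set (Fin n → ℝ)) (hS : IsCompact S)
    (f : (Fin n → ℝ) → (Fin n → ℝ)) (hf : Continuous f)
    (μ₁ : Measure (Fin n → ℝ)) [IsFiniteMeasure μ₁] :
    (∃ μ₀ : Measure (Fin n → ℝ), IsFiniteMeasure μ₀ ∧ μ₀ Sᶜ = 0 ∧
        Measure.map f μ₀ = μ₁) ↔
      ¬ ∃ v : (Fin n → ℝ) → ℝ, Continuous v ∧ (∀ x ∈ S, 0 ≤ v (f x)) ∧
          (∫ x, v x ∂μ₁) < 0 := by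
  constructor
  · rintro ⟨μ₀, -, hμ₀, rfl⟩ ⟨v, hv, hvS, hint⟩
    rw [integral_map hf.aemeasurable hv.aestronglyMeasurable] at hint
    have hvS_ae : ∀ᵐ x ∂μ₀, 0 ≤ v (f x) :=
      measure_mono_null (fun x hx hxS => hx (hvS x hxS)) hμ₀
    exact hint.not_ge (integral_nonneg_of_ae hvS_ae)
  · intro hno
    push Not at hno
    have hμ₁ : μ₁ (f '' S)ᶜ = 0 :=
      measure_compl_eq_zero_of_forall_integral_nonneg (hS.image hf).isClosed
        fun v hv hvT => hno v hv fun x hx => hvT _ (Set.mem_image_of_mem f hx)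
    obtain ⟨g, hg, hgS⟩ := hS.exists_measurable_section hf
    have hfg : f ∘ g =ᵐ[μ₁] id := measure_mono_null (fun y hy hyT => hy (hgS y hyT).2) hμ₁
    refine ⟨μ₁.map g, inferInstance, ?_, ?_⟩
    · rw [Measure.map_apply hg hS.isClosed.measurableSet.compl]
      exact measure_mono_null (fun y hy hyT => hy (hgS y hyT).1) hμ₁
    · rw [Measure.map_map hf.measurable hg, Measure.map_congr hfg, Measure.map_id]

/-- Existence of a pullback measure: given compact sets `S`, `B` with `f(S) ⊆ B`
and a finite positive Borel measure `μ₁` vanishing outside `B`, there exists a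
finite positive Borel measure `μ₀` vanishing outside `S` with `f_# μ₀ = μ₁` if and
only if there is no continuous `v` with `v ∘ f ≥ 0` on `S` and `∫ v dμ₁ < 0`. -/
theorem pullback_measure_iff (n : ℕ) (hn : 1 ≤ n)
    (S B : Set (Fin n → ℝ)) (hS : IsCompact S) (hB : IsCompact B)
    (f : (Fin n → ℝ) → (Fin n → ℝ)) (hf : Continuous f) (hfSB : f '' S ⊆ B)
    (μ₁ : Measure (Fin n → ℝ)) [IsFiniteMeasure μ₁] (hμ₁ : μ₁ Bᶜ = 0) :
    (∃ μ₀ : Measure (Fin n → ℝ), IsFiniteMeasure μ₀ ∧ μ₀ Sᶜ = 0 ∧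
        Measure.map f μ₀ = μ₁) ↔
      ¬ ∃ v : (Fin n → ℝ) → ℝ, Continuous v ∧ (∀ x ∈ S, 0 ≤ v (f x)) ∧
          (∫ x, v x ∂μ₁) < 0 :=
  pullback_measure_iff_general n S hS f hf μ₁
end

section
/- For every t ∈ ℕ there exist a finite positive Borel measure μ_{0,t} vanishing outside X⁰ such that (f^t)_#μ_{0,t} = λ_{Y^t}, and, setting ν_t := Σ_{i=0}^{t-1} f^i_#μ_{0,t}, the per-step Liouville equation λ_{Y^t} + ν_t = f_#ν_t + μ_{0,t} holds as an equality of measures on ℝ^n. -/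
/-!
Lebesgue measure `λ` on `f^t(X⁰)` is absolutely continuous with respect to the pushforward of
`λ_{X⁰}` under `f^t`, because the polynomial (hence differentiable) map `f^t` sends null sets to
null sets. So `μ_{0,t} := (h ∘ f^t) · λ_{X⁰}`, with `h` the Radon–Nikodym derivative of
`λ_{Y^t}` with respect to `(f^t)_# λ_{X⁰}`, pushes forward to `λ_{Y^t}`. The Liouville equation is
then the telescoping identity `∑_{i ≤ t} f^i_# μ = f_# (∑_{i < t} f^i_# μ) + μ`.
-/

open MeasureTheory Finset

theorem MvPolynomial.differentiable_eval {n : ℕ} (p : MvPolynomial (Fin n) ℝ) :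
    Differentiable ℝ fun x : Fin n → ℝ => MvPolynomial.eval x p := by
  induction p using MvPolynomial.induction_on with
  | C a => simp
  | add p q hp hq => simp only [MvPolynomial.eval_add]; exact hp.add hq
  | mul_X p i hp =>
    simp only [MvPolynomial.eval_mul, MvPolynomial.eval_X]
    exact hp.mul (differentiable_pi.mp differentiable_id i)

theorem differentiable_of_forall_coord_eq_eval {n : ℕ} {f : (Fin n → ℝ) → Fin n → ℝ}
    (hf : ∀ i, ∃ p : MvPolynomial (Fin n) ℝ, ∀ x, f x i = MvPolynomial.eval x p) :
    Differentiable ℝ f :=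
  differentiable_pi.mpr fun i => by
    obtain ⟨p, hp⟩ := hf i
    simpa only [← hp] using p.differentiable_eval

namespace MeasureTheory.Measure

variable {α β : Type*} [MeasurableSpace α] [MeasurableSpace β]

theorem map_withDensity_comp {g : α → β} (hg : Measurable g) {h : β → ENNReal}
    (hh : Measurable h) (μ : Measure α) :
    (μ.withDensity (h ∘ g)).map g = (μ.map g).withDensity h := by
  ext s hs
  rw [map_apply hg hs, withDensity_apply _ (hg hs), withDensity_apply _ hs,
    setLIntegral_map hs hh hg, Function.comp_def]

theorem exists_absolutelyContinuous_map_eq {g : α → β} (hg : Measurable g) {μ : Measure α}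
    {ν : Measure β} [SigmaFinite ν] [SigmaFinite (μ.map g)] (hν : ν ≪ μ.map g) :
    ∃ ρ : Measure α, ρ ≪ μ ∧ ρ.map g = ν := by
  refine ⟨μ.withDensity (ν.rnDeriv (μ.map g) ∘ g), withDensity_absolutelyContinuous _ _, ?_⟩
  rw [map_withDensity_comp hg (measurable_rnDeriv _ _), withDensity_rnDeriv_eq _ _ hν]

theorem map_iterate_add_sum_range_eq {f : α → α} (hf : Measurable f) (μ : Measure α) (t : ℕ) :
    μ.map f^[t] + ∑ i ∈ range t, μ.map f^[i] = (∑ i ∈ range t, μ.map f^[i]).map f + μ := by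
  rw [add_comm, ← sum_range_succ, sum_range_succ', map_finset_sum hf.aemeasurable,
    Function.iterate_zero, map_id]
  congr 1
  refine Finset.sum_congr rfl fun i _ => ?_
  rw [map_map hf (hf.iterate i), ← Function.iterate_succ']

/-- Lusin's property (N) of maps differentiable on `s`. -/
theorem restrict_absolutelyContinuous_map_restrict {E : Type*} [NormedAddCommGroup E]
    [NormedSpace ℝ E] [FiniteDimensional ℝ E] [MeasurableSpace E] [BorelSpace E]
    (μ : Measure E) [μ.IsAddHaarMeasure] {g : E → E} (hgm : Measurable g) {s t : Set E}
    (hgd : DifferentiableOn ℝ g s) (hts : t ⊆ g '' s) :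
    μ.restrict t ≪ (μ.restrict s).map g := by
  refine AbsolutelyContinuous.mk fun A hA hA0 => ?_
  rw [map_apply hgm hA, restrict_apply (hgm hA)] at hA0
  rw [restrict_apply hA]
  refine measure_mono_null ?_
    (addHaar_image_eq_zero_of_differentiableOn_of_addHaar_eq_zero μ
      (hgd.mono Set.inter_subset_right) hA0)
  rintro y ⟨hyA, hyt⟩
  obtain ⟨x, hxs, rfl⟩ := hts hyt
  exact ⟨x, ⟨hyA, hxs⟩, rfl⟩

end MeasureTheory.Measure

theorem per_step_liouville_general (n : ℕ)
    (f : (Fin n → ℝ) → (Fin n → ℝ))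
    (hfpoly : ∀ i, ∃ p : MvPolynomial (Fin n) ℝ, ∀ x, f x i = MvPolynomial.eval x p)
    (X0 : Set (Fin n → ℝ)) (hX0 : IsCompact X0)
    (Y : ℕ → Set (Fin n → ℝ))
    (hY0 : Y 0 = X0)
    (hYt : ∀ t : ℕ, 1 ≤ t → Y t = f^[t] '' X0 \ ⋃ s ∈ Finset.range t, f^[s] '' X0) :
    ∀ t : ℕ, ∃ μ0t : Measure (Fin n → ℝ), IsFiniteMeasure μ0t ∧ μ0t X0ᶜ = 0 ∧
      Measure.map (f^[t]) μ0t = volume.restrict (Y t) ∧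
      volume.restrict (Y t) + (∑ i ∈ Finset.range t, Measure.map (f^[i]) μ0t)
        = Measure.map f (∑ i ∈ Finset.range t, Measure.map (f^[i]) μ0t) + μ0t := by
  intro t
  have hfd := differentiable_of_forall_coord_eq_eval hfpoly
  have hft : Measurable f^[t] := (hfd.iterate t).continuous.measurable
  have hY_sub : Y t ⊆ f^[t] '' X0 := by
    rcases t with _ | t
    · simp [hY0]
    · exact (hYt _ t.succ_pos).symm ▸ Set.sdiff_subset
  have : IsFiniteMeasure (volume.restrict (Y t)) := isFiniteMeasure_restrict.mpr
    ((measure_mono hY_sub).trans_lt (hX0.image (hfd.iterate t).continuous).measure_lt_top).ne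
  have : IsFiniteMeasure (volume.restrict X0) := isFiniteMeasure_restrict.mpr hX0.measure_ne_top
  obtain ⟨μ0, hμ0, hmap⟩ := Measure.exists_absolutelyContinuous_map_eq hft
    (Measure.restrict_absolutelyContinuous_map_restrict volume hft
      (hfd.iterate t).differentiableOn hY_sub)
  refine ⟨μ0, ?_, hμ0 ?_, hmap, ?_⟩
  · have : IsFiniteMeasure (μ0.map f^[t]) := hmap ▸ inferInstance
    exact Measure.isFiniteMeasure_of_map hft.aemeasurable
  · rw [Measure.restrict_apply hX0.measurableSet.compl, Set.compl_inter_self, measure_empty]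
  · rw [← hmap]
    exact Measure.map_iterate_add_sum_range_eq hfd.continuous.measurable μ0 t

/-- Per-step Liouville equation: for every `t` there is a finite positive Borel
measure `μ_{0,t}` vanishing outside `X⁰` with `(f^t)_# μ_{0,t} = λ_{Y^t}`, and with
`ν_t = ∑_{i<t} (f^i)_# μ_{0,t}` one has `λ_{Y^t} + ν_t = f_# ν_t + μ_{0,t}`. -/
theorem per_step_liouville (n : ℕ) (hn : 1 ≤ n)
    (f : (Fin n → ℝ) → (Fin n → ℝ))
    (hfpoly : ∀ i, ∃ p : MvPolynomial (Fin n) ℝ, ∀ x, f x i = MvPolynomial.eval x p)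
    (X0 X : Set (Fin n → ℝ)) (hX0 : IsCompact X0) (hX : IsCompact X)
    (hreach : (⋃ t : ℕ, f^[t] '' X0) ⊆ X)
    (Y : ℕ → Set (Fin n → ℝ))
    (hY0 : Y 0 = X0)
    (hYt : ∀ t : ℕ, 1 ≤ t → Y t = f^[t] '' X0 \ ⋃ s ∈ Finset.range t, f^[s] '' X0) :
    ∀ t : ℕ, ∃ μ0t : Measure (Fin n → ℝ), IsFiniteMeasure μ0t ∧ μ0t X0ᶜ = 0 ∧
      Measure.map (f^[t]) μ0t = volume.restrict (Y t) ∧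
      volume.restrict (Y t) + (∑ i ∈ Finset.range t, Measure.map (f^[i]) μ0t)
        = Measure.map f (∑ i ∈ Finset.range t, Measure.map (f^[i]) μ0t) + μ0t :=
  per_step_liouville_general n f hfpoly X0 hX0 Y hY0 hYt
end

section
/- Let μ₀ ∈ M₊(X⁰) and μ, ν ∈ M₊(X) be finite positive Borel measures satisfying the discrete Liouville equation μ + ν = f_#ν + μ₀ (as measures on ℝ^n). Then μ(X \ X^∞) = 0; in particular the support of μ is contained in the closure of X^∞. -/
/-!
The reachable set `A` is measurable (a countable union of compact sets) and forward invariant,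
so `f⁻¹' Aᶜ ⊆ Aᶜ`, and `μ₀` does not charge `Aᶜ` because `X⁰ ⊆ A`. Evaluating the Liouville
equation on `Aᶜ` gives `μ Aᶜ + ν Aᶜ = ν (f⁻¹' Aᶜ) ≤ ν Aᶜ`, and since `ν` is finite, `μ Aᶜ = 0`.
-/

open MeasureTheory Set

theorem continuous_of_forall_eq_mvPolynomial_eval {R σ ι : Type*} [CommSemiring R]
    [TopologicalSpace R] [IsTopologicalSemiring R] {f : (σ → R) → ι → R}
    (hf : ∀ i, ∃ p : MvPolynomial σ R, ∀ x, f x i = MvPolynomial.eval x p) : Continuous f :=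
  continuous_pi fun i => by
    obtain ⟨p, hp⟩ := hf i
    simpa only [hp] using p.continuous_eval

section Iterates

variable {α : Type*} (f : α → α) (s : Set α)

theorem subset_iUnion_image_iterate : s ⊆ ⋃ t : ℕ, f^[t] '' s :=
  subset_iUnion_of_subset 0 (image_id s).symm.subset

theorem mapsTo_iUnion_image_iterate : MapsTo f (⋃ t : ℕ, f^[t] '' s) (⋃ t : ℕ, f^[t] '' s) := by
  rintro _ ⟨_, ⟨t, rfl⟩, y, hy, rfl⟩
  exact mem_iUnion.2 ⟨t + 1, y, hy, Function.iterate_succ_apply' f t y⟩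

theorem IsCompact.measurableSet_iUnion_image_iterate [TopologicalSpace α] [T2Space α]
    [MeasurableSpace α] [OpensMeasurableSpace α] {f : α → α} {s : Set α} (hs : IsCompact s)
    (hf : Continuous f) : MeasurableSet (⋃ t : ℕ, f^[t] '' s) :=
  MeasurableSet.iUnion fun t => (hs.image (hf.iterate t)).isClosed.measurableSet

end Iterates

theorem measure_compl_eq_zero_of_add_eq_map_add {α : Type*} [MeasurableSpace α] {f : α → α}
    (hf : Measurable f) {A : Set α} (hA : MeasurableSet A) (hfA : MapsTo f A A)
    {μ₀ μ ν : Measure α} [IsFiniteMeasure ν] (hμ₀ : μ₀ Aᶜ = 0)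
    (hliou : μ + ν = ν.map f + μ₀) : μ Aᶜ = 0 := by
  have hle : μ Aᶜ + ν Aᶜ ≤ 0 + ν Aᶜ :=
    calc μ Aᶜ + ν Aᶜ = (ν.map f + μ₀) Aᶜ := by rw [← hliou, Measure.add_apply]
      _ = ν (f ⁻¹' Aᶜ) := by rw [Measure.add_apply, Measure.map_apply hf hA.compl, hμ₀, add_zero]
      _ ≤ ν Aᶜ := measure_mono fun x hx hxA => hx (hfA hxA)
      _ = 0 + ν Aᶜ := (zero_add _).symm
  exact nonpos_iff_eq_zero.1 ((ENNReal.add_le_add_iff_right (measure_ne_top ν _)).1 hle)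

theorem support_in_closure_reachable_general (n : ℕ)
    (f : (Fin n → ℝ) → (Fin n → ℝ))
    (hfpoly : ∀ i, ∃ p : MvPolynomial (Fin n) ℝ, ∀ x, f x i = MvPolynomial.eval x p)
    (X0 X : Set (Fin n → ℝ)) (hX0 : IsCompact X0)
    (μ₀ μ ν : Measure (Fin n → ℝ))
    [IsFiniteMeasure ν]
    (hμ₀ : μ₀ X0ᶜ = 0)
    (hliou : μ + ν = Measure.map f ν + μ₀) :
    μ (X \ ⋃ t : ℕ, f^[t] '' X0) = 0 ∧
      μ (closure (⋃ t : ℕ, f^[t] '' X0))ᶜ = 0 := by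
  have hf : Continuous f := continuous_of_forall_eq_mvPolynomial_eval hfpoly
  have hreach : μ (⋃ t : ℕ, f^[t] '' X0)ᶜ = 0 :=
    measure_compl_eq_zero_of_add_eq_map_add hf.measurable
      (hX0.measurableSet_iUnion_image_iterate hf) (mapsTo_iUnion_image_iterate f X0)
      (measure_mono_null (compl_subset_compl.2 (subset_iUnion_image_iterate f X0)) hμ₀) hliou
  exact ⟨measure_mono_null (sdiff_subset_compl _ _) hreach,
    measure_mono_null (compl_subset_compl.2 subset_closure) hreach⟩

/-- If `μ₀ ∈ M₊(X⁰)` and `μ, ν ∈ M₊(X)` satisfy the discrete Liouville equation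
`μ + ν = f_# ν + μ₀`, then `μ(X \ X^∞) = 0`; in particular the support of `μ` is
contained in the closure of `X^∞`. -/
theorem support_in_closure_reachable (n : ℕ) (hn : 1 ≤ n)
    (f : (Fin n → ℝ) → (Fin n → ℝ))
    (hfpoly : ∀ i, ∃ p : MvPolynomial (Fin n) ℝ, ∀ x, f x i = MvPolynomial.eval x p)
    (X0 X : Set (Fin n → ℝ)) (hX0 : IsCompact X0) (hX : IsCompact X)
    (hreach : (⋃ t : ℕ, f^[t] '' X0) ⊆ X)
    (μ₀ μ ν : Measure (Fin n → ℝ))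
    [IsFiniteMeasure μ₀] [IsFiniteMeasure μ] [IsFiniteMeasure ν]
    (hμ₀ : μ₀ X0ᶜ = 0) (hμ : μ Xᶜ = 0) (hν : ν Xᶜ = 0)
    (hliou : μ + ν = Measure.map f ν + μ₀) :
    μ (X \ ⋃ t : ℕ, f^[t] '' X0) = 0 ∧
      μ (closure (⋃ t : ℕ, f^[t] '' X0))ᶜ = 0 :=
  support_in_closure_reachable_general n f hfpoly X0 X hX0 μ₀ μ ν hμ₀ hliou
end

section
/- (Weak duality.) Let T ≥ 1 be an integer. Let (μ₀, μ, μ̂, ν, a) be feasible for the primal LP, i.e. μ₀ ∈ M₊(X⁰), μ, μ̂, ν ∈ M₊(X), a ≥ 0, ν(ℝ^n) + a = T·vol X, μ + ν = f_#ν + μ₀, and μ + μ̂ = λ_X. Let (u, v, w) be feasible for the dual LP, i.e. u ≥ 0, v, w : ℝ^n → ℝ continuous, v ≥ 0 on X⁰, w ≥ 1 + v on X, w ≥ 0 on X, and u + v(f(x)) ≥ v(x) for all x ∈ X. Then μ(ℝ^n) ≤ ∫_X (w(x) + T·u) dλ_X(x). -/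
open MeasureTheory
open scoped ENNReal

/-!
Pair the primal measures with the dual functions. Integrating `v` against the Liouville equation
`μ + ν = f_# ν + μ₀` gives `∫ v dμ = ∫ (v ∘ f - v) dν + ∫ v dμ₀ ≥ -u ν(ℝⁿ)`, and `1 + v ≤ w` on `X`
turns this into `μ(ℝⁿ) ≤ ∫ w dμ + u ν(ℝⁿ)`. Finally `μ ≤ λ_X` with `w ≥ 0` on `X` bounds
`∫ w dμ` by `∫_X w`, and the mass constraint bounds `ν(ℝⁿ)` by `T vol X`.
-/

theorem continuous_of_forall_exists_mvPolynomial_eval {σ ι R : Type*} [CommSemiring R]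
    [TopologicalSpace R] [IsTopologicalSemiring R] {f : (σ → R) → ι → R}
    (hf : ∀ i, ∃ p : MvPolynomial σ R, ∀ x, f x i = MvPolynomial.eval x p) : Continuous f :=
  continuous_pi fun i => by
    obtain ⟨p, hp⟩ := hf i
    simpa only [← hp] using MvPolynomial.continuous_eval p

section

variable {α : Type*} [MeasurableSpace α]

theorem Continuous.integrable_of_measure_compl_eq_zero [TopologicalSpace α] [T2Space α]
    [OpensMeasurableSpace α] {S : Set α} (hS : IsCompact S) {m : Measure α}
    [IsFiniteMeasureOnCompacts m] (hm : m Sᶜ = 0) {g : α → ℝ} (hg : Continuous g) :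
    Integrable g m := by
  have h := hg.continuousOn.integrableOn_compact (μ := m) hS
  rwa [IntegrableOn, Measure.restrict_eq_self_of_ae_mem (mem_ae_iff.2 hm)] at h

theorem integral_add_integral_eq_of_add_eq_map_add {μ ν μ₀ : Measure α} {f : α → α}
    (hf : Measurable f) (hliou : μ + ν = ν.map f + μ₀) {v : α → ℝ} (hv : StronglyMeasurable v)
    (hvμ : Integrable v μ) (hvν : Integrable v ν) (hvfν : Integrable (fun x => v (f x)) ν)
    (hvμ₀ : Integrable v μ₀) :
    ∫ x, v x ∂μ + ∫ x, v x ∂ν = ∫ x, v (f x) ∂ν + ∫ x, v x ∂μ₀ := by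
  have hvmap : Integrable v (ν.map f) :=
    (integrable_map_measure hv.aestronglyMeasurable hf.aemeasurable).2 hvfν
  rw [← integral_add_measure hvμ hvν, hliou, integral_add_measure hvmap hvμ₀,
    integral_map hf.aemeasurable hv.aestronglyMeasurable]

theorem integral_sub_integral_comp_le {S : Set α} {ν : Measure α} [IsFiniteMeasure ν]
    (hν : ν Sᶜ = 0) {f : α → α} {v : α → ℝ} {u : ℝ} (hvν : Integrable v ν)
    (hvfν : Integrable (fun x => v (f x)) ν) (hdec : ∀ x ∈ S, v x ≤ u + v (f x)) :
    ∫ x, v x ∂ν - ∫ x, v (f x) ∂ν ≤ u * ν.real Set.univ := by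
  have h : ∫ x, (v x - v (f x)) ∂ν ≤ ∫ _, u ∂ν :=
    integral_mono_ae (hvν.sub hvfν) (integrable_const u) (by
      filter_upwards [mem_ae_iff.2 hν] with x hx
      linarith [hdec x hx])
  rwa [integral_sub hvν hvfν, integral_const, smul_eq_mul, mul_comm] at h

theorem measureReal_univ_le_integral_sub {S : Set α} {μ : Measure α} [IsFiniteMeasure μ]
    (hμ : μ Sᶜ = 0) {v w : α → ℝ} (hvμ : Integrable v μ) (hwμ : Integrable w μ)
    (hvw : ∀ x ∈ S, 1 + v x ≤ w x) :
    μ.real Set.univ ≤ ∫ x, w x ∂μ - ∫ x, v x ∂μ := by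
  have h : ∫ _, (1 : ℝ) ∂μ ≤ ∫ x, (w x - v x) ∂μ :=
    integral_mono_ae (integrable_const 1) (hwμ.sub hvμ) (by
      filter_upwards [mem_ae_iff.2 hμ] with x hx
      linarith [hvw x hx])
  rwa [integral_const, smul_eq_mul, mul_one, integral_sub hwμ hvμ] at h

theorem measureReal_univ_le_of_add_eq {ν : Measure α} {a c : ℝ≥0∞} (hc : c ≠ ∞)
    (hmass : ν Set.univ + a = c) : ν.real Set.univ ≤ c.toReal :=
  ENNReal.toReal_mono hc (hmass ▸ le_self_add)

end

theorem weak_duality_general (n : ℕ)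
    (f : (Fin n → ℝ) → (Fin n → ℝ))
    (hfpoly : ∀ i, ∃ p : MvPolynomial (Fin n) ℝ, ∀ x, f x i = MvPolynomial.eval x p)
    (X0 X : Set (Fin n → ℝ)) (hX0 : IsCompact X0) (hX : IsCompact X)
    (T : ℕ)
    -- primal feasible point
    (μ₀ μ μh ν : Measure (Fin n → ℝ))
    [IsFiniteMeasure μ₀] [IsFiniteMeasure μ] [IsFiniteMeasure ν]
    (hμ₀ : μ₀ X0ᶜ = 0) (hμ : μ Xᶜ = 0) (hν : ν Xᶜ = 0)
    (a : ℝ≥0∞) (hmass : ν Set.univ + a = (T : ℝ≥0∞) * volume X)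
    (hliou : μ + ν = Measure.map f ν + μ₀)
    (hlam : μ + μh = volume.restrict X)
    -- dual feasible point
    (u : ℝ) (v w : (Fin n → ℝ) → ℝ)
    (hu : 0 ≤ u) (hv : Continuous v) (hw : Continuous w)
    (hv0 : ∀ x ∈ X0, 0 ≤ v x)
    (hwv : ∀ x ∈ X, 1 + v x ≤ w x)
    (hw0 : ∀ x ∈ X, 0 ≤ w x)
    (hdec : ∀ x ∈ X, v x ≤ u + v (f x)) :
    (μ Set.univ).toReal ≤ ∫ x in X, (w x + (T : ℝ) * u) := by
  have hf := continuous_of_forall_exists_mvPolynomial_eval hfpoly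
  have hvμ := hv.integrable_of_measure_compl_eq_zero hX hμ
  have hvν := hv.integrable_of_measure_compl_eq_zero hX hν
  have hvfν := (hv.comp hf).integrable_of_measure_compl_eq_zero hX hν
  have hliouv := integral_add_integral_eq_of_add_eq_map_add hf.measurable hliou
    hv.stronglyMeasurable hvμ hvν hvfν (hv.integrable_of_measure_compl_eq_zero hX0 hμ₀)
  have hμbound := measureReal_univ_le_integral_sub hμ hvμ
    (hw.integrable_of_measure_compl_eq_zero hX hμ) hwv
  have hνstep := integral_sub_integral_comp_le hν hvν hvfν hdec
  have hv₀ : 0 ≤ ∫ x, v x ∂μ₀ :=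
    integral_nonneg_of_ae (Filter.mem_of_superset (mem_ae_iff.2 hμ₀) hv0)
  have hwX : ∫ x, w x ∂μ ≤ ∫ x in X, w x :=
    integral_mono_measure (hlam ▸ Measure.le_add_right le_rfl)
      (ae_restrict_of_forall_mem hX.measurableSet hw0)
      (hw.continuousOn.integrableOn_compact hX)
  have hνmass : ν.real Set.univ ≤ T * volume.real X := by
    simpa only [ENNReal.toReal_mul, ENNReal.toReal_natCast, ← measureReal_def] using
      measureReal_univ_le_of_add_eq (ENNReal.mul_ne_top (by simp) hX.measure_lt_top.ne) hmass
  rw [integral_add (hw.continuousOn.integrableOn_compact hX)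
      (integrableOn_const hX.measure_lt_top.ne), setIntegral_const, smul_eq_mul]
  change μ.real Set.univ ≤ _
  linarith [mul_le_mul_of_nonneg_left hνmass hu]

/-- Weak duality between the primal LP over measures and the dual LP over
continuous functions. -/
theorem weak_duality (n : ℕ) (hn : 1 ≤ n)
    (f : (Fin n → ℝ) → (Fin n → ℝ))
    (hfpoly : ∀ i, ∃ p : MvPolynomial (Fin n) ℝ, ∀ x, f x i = MvPolynomial.eval x p)
    (X0 X : Set (Fin n → ℝ)) (hX0 : IsCompact X0) (hX : IsCompact X)
    (hreach : (⋃ t : ℕ, f^[t] '' X0) ⊆ X)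
    (T : ℕ) (hT : 1 ≤ T)
    -- primal feasible point
    (μ₀ μ μh ν : Measure (Fin n → ℝ))
    [IsFiniteMeasure μ₀] [IsFiniteMeasure μ] [IsFiniteMeasure μh] [IsFiniteMeasure ν]
    (hμ₀ : μ₀ X0ᶜ = 0) (hμ : μ Xᶜ = 0) (hμh : μh Xᶜ = 0) (hν : ν Xᶜ = 0)
    (a : ℝ≥0∞) (hmass : ν Set.univ + a = (T : ℝ≥0∞) * volume X)
    (hliou : μ + ν = Measure.map f ν + μ₀)
    (hlam : μ + μh = volume.restrict X)
    -- dual feasible point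
    (u : ℝ) (v w : (Fin n → ℝ) → ℝ)
    (hu : 0 ≤ u) (hv : Continuous v) (hw : Continuous w)
    (hv0 : ∀ x ∈ X0, 0 ≤ v x)
    (hwv : ∀ x ∈ X, 1 + v x ≤ w x)
    (hw0 : ∀ x ∈ X, 0 ≤ w x)
    (hdec : ∀ x ∈ X, v x ≤ u + v (f x)) :
    (μ Set.univ).toReal ≤ ∫ x in X, (w x + (T : ℝ) * u) :=
  weak_duality_general n f hfpoly X0 X hX0 hX T μ₀ μ μh ν hμ₀ hμ hν a hmass hliou hlam u v w hu hv
    hw hv0 hwv hw0 hdec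
end

section
/- Let v : ℝ^n → ℝ be a polynomial (in particular continuous) function such that v(x) ≥ 0 for all x ∈ X⁰ and v(f(x)) ≥ v(x) for all x ∈ X. Then v(x) ≥ 0 for every x in the closure of X^∞; equivalently, cl(X^∞) ⊆ {x ∈ X : v(x) ≥ 0}, and in particular the superlevel set {x ∈ X : v(x) ≥ 0} is an outer approximation of the reachable set X^∞. -/
/-- If `v` is a polynomial function, nonnegative on `X⁰`, with `v(f(x)) ≥ v(x)` on `X`,
then `v ≥ 0` on the closure of the reachable set `X^∞`; in particular
`cl(X^∞) ⊆ {x ∈ X : v(x) ≥ 0}`. -/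
theorem outer_approx_infinite_horizon (n : ℕ) (hn : 1 ≤ n)
    (f : (Fin n → ℝ) → (Fin n → ℝ))
    (hfpoly : ∀ i, ∃ p : MvPolynomial (Fin n) ℝ, ∀ x, f x i = MvPolynomial.eval x p)
    (X0 X : Set (Fin n → ℝ)) (hX0 : IsCompact X0) (hX : IsCompact X)
    (hreach : (⋃ t : ℕ, f^[t] '' X0) ⊆ X)
    (v : (Fin n → ℝ) → ℝ)
    (hvpoly : ∃ p : MvPolynomial (Fin n) ℝ, ∀ x, v x = MvPolynomial.eval x p)
    (hv0 : ∀ x ∈ X0, 0 ≤ v x)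
    (hinc : ∀ x ∈ X, v x ≤ v (f x)) :
    (∀ x ∈ closure (⋃ t : ℕ, f^[t] '' X0), 0 ≤ v x) ∧
      closure (⋃ t : ℕ, f^[t] '' X0) ⊆ {x ∈ X | 0 ≤ v x} := by
  obtain ⟨p, hp⟩ := hvpoly
  have hvcont : Continuous v := by
    have : Continuous fun x => MvPolynomial.eval x p := p.continuous_eval
    simpa [funext hp] using this
  have hunion : ∀ x ∈ (⋃ t : ℕ, f^[t] '' X0), 0 ≤ v x := by
    have key : ∀ t : ℕ, ∀ x ∈ X0, 0 ≤ v (f^[t] x) := by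
      intro t
      induction t with
      | zero => simpa using hv0
      | succ k ih =>
        intro x hx
        have hmem : f^[k] x ∈ X := hreach (Set.mem_iUnion.2 ⟨k, ⟨x, hx, rfl⟩⟩)
        have := hinc _ hmem
        rw [Function.iterate_succ_apply']
        exact le_trans (ih x hx) this
    intro x hx
    obtain ⟨t, y, hy, rfl⟩ := by simpa using hx
    exact key t y hy
  have hcl : ∀ x ∈ closure (⋃ t : ℕ, f^[t] '' X0), 0 ≤ v x := by
    have : closure (⋃ t : ℕ, f^[t] '' X0) ⊆ {x | 0 ≤ v x} :=
      closure_minimal hunion (isClosed_le continuous_const hvcont)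
    exact fun x hx => this hx
  refine ⟨hcl, fun x hx => ⟨?_, hcl x hx⟩⟩
  exact (closure_minimal hreach hX.isClosed) hx
end

section
/- Let X ⊆ ℝ^n be compact and let S ⊆ X be closed. Then there exists a sequence of polynomial functions (w_k) on ℝ^n such that w_k(x) ≥ 1_S(x) for all x ∈ X and all k, and ∫_X |w_k(x) − 1_S(x)| dλ(x) → 0 as k → ∞, where λ is the Lebesgue measure on ℝ^n and 1_S is the indicator function of S. Equivalently, for every ε > 0 there is a polynomial w with w ≥ 1_S on X and ∫_X (w − 1_S) dλ ≤ ε. -/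
/-!
The indicator of the closed set `S` is approximated from above by a thickened indicator `g`,
a continuous function with `1_S ≤ g ≤ 1`; as the thickening radius tends to `0`, dominated
convergence gives `∫_X g → λ(S ∩ X)`. By Stone–Weierstrass a polynomial approximates `g` uniformly
within `η` on the compact set `X`; shifted up by `η` it lies above `g`, hence above `1_S`, and its
integral over `X` exceeds that of `g` by at most `2η λ(X)`.
-/

open MeasureTheory Filter
open scoped Topology ENNReal

namespace MvPolynomial

variable {ι : Type*}

theorem aeval_continuousMapEval_apply (p : MvPolynomial ι ℝ) (x : ι → ℝ) :
    aeval (ContinuousMap.eval : ι → C(ι → ℝ, ℝ)) p x = eval x p := by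
  induction p using MvPolynomial.induction_on with
  | C a => simp
  | add p q hp hq => simp [hp, hq]
  | mul_X p i hp => simp [hp]

theorem separatesPoints_range_aeval_continuousMapEval :
    (aeval (R := ℝ) (ContinuousMap.eval : ι → C(ι → ℝ, ℝ))).range.SeparatesPoints := by
  intro x y hxy
  obtain ⟨i, hi⟩ := Function.ne_iff.mp hxy
  exact ⟨ContinuousMap.eval i, ⟨ContinuousMap.eval i, ⟨X i, aeval_X _ i⟩, rfl⟩, hi⟩

theorem exists_abs_eval_sub_lt {X : Set (ι → ℝ)} (hX : IsCompact X) {f : (ι → ℝ) → ℝ}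
    (hf : Continuous f) {ε : ℝ} (hε : 0 < ε) :
    ∃ p : MvPolynomial ι ℝ, ∀ x ∈ X, |eval x p - f x| < ε := by
  obtain ⟨_, ⟨p, rfl⟩, hp⟩ :=
    ContinuousMap.exists_mem_subalgebra_near_continuous_of_isCompact_of_separatesPoints
      separatesPoints_range_aeval_continuousMapEval ⟨f, hf⟩ hX hε
  exact ⟨p, fun x hx ↦ by simpa [aeval_continuousMapEval_apply] using hp x hx⟩

theorem exists_le_eval_le_add {X : Set (ι → ℝ)} (hX : IsCompact X) {f : (ι → ℝ) → ℝ}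
    (hf : Continuous f) {ε : ℝ} (hε : 0 < ε) :
    ∃ p : MvPolynomial ι ℝ, ∀ x ∈ X, f x ≤ eval x p ∧ eval x p ≤ f x + ε := by
  obtain ⟨p, hp⟩ := exists_abs_eval_sub_lt hX hf (half_pos hε)
  refine ⟨p + C (ε / 2), fun x hx ↦ ?_⟩
  have := abs_lt.mp (hp x hx)
  simp only [eval_add, eval_C]
  constructor <;> linarith

end MvPolynomial

theorem exists_continuous_indicator_le_integral_le {Ω : Type*} [PseudoEMetricSpace Ω]
    [MeasurableSpace Ω] [OpensMeasurableSpace Ω] (μ : Measure Ω) [IsFiniteMeasure μ]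
    {F : Set Ω} (hF : IsClosed F) {ε : ℝ} (hε : 0 < ε) :
    ∃ g : Ω → ℝ, Continuous g ∧ Integrable g μ ∧
      (∀ x, F.indicator (fun _ ↦ (1 : ℝ)) x ≤ g x) ∧ ∫ x, g x ∂μ ≤ μ.real F + ε := by
  have hδ : ∀ n : ℕ, 0 < 1 / ((n : ℝ) + 1) := fun _ ↦ Nat.one_div_pos_of_nat
  obtain ⟨n, hn⟩ := ((tendsto_integral_thickenedIndicator_of_isClosed μ hF hδ
    tendsto_one_div_add_atTop_nhds_zero_nat).eventually
      (gt_mem_nhds (lt_add_of_pos_right _ hε))).exists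
  refine ⟨fun x ↦ thickenedIndicator (hδ n) F x, by fun_prop,
    integrable_thickenedIndicator F (hδ n), fun x ↦ ?_, hn.le⟩
  have := indicator_le_thickenedIndicator (hδ n) F x
  by_cases hx : x ∈ F <;> simp_all

theorem exists_mvPolynomial_indicator_le_setIntegral_le {ι : Type*} [Fintype ι]
    (μ : Measure (ι → ℝ)) [IsFiniteMeasureOnCompacts μ] {X S : Set (ι → ℝ)} (hX : IsCompact X)
    (hS : IsClosed S) {ε : ℝ} (hε : 0 < ε) :
    ∃ p : MvPolynomial ι ℝ, (∀ x ∈ X, S.indicator (fun _ ↦ (1 : ℝ)) x ≤ p.eval x) ∧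
      ∫ x in X, p.eval x ∂μ ≤ μ.real (S ∩ X) + ε := by
  have : IsFiniteMeasure (μ.restrict X) := isFiniteMeasure_restrict.2 hX.measure_lt_top.ne
  obtain ⟨g, hg, hg_int, hSg, hg_le⟩ :=
    exists_continuous_indicator_le_integral_le (μ.restrict X) hS (half_pos hε)
  set η := ε / 2 / (μ.real X + 1)
  have hη : 0 < η := by positivity
  obtain ⟨p, hp⟩ := MvPolynomial.exists_le_eval_le_add hX hg hη
  refine ⟨p, fun x hx ↦ (hSg x).trans (hp x hx).1, ?_⟩
  have hηX : η * μ.real X ≤ ε / 2 := by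
    rw [div_mul_eq_mul_div, div_le_iff₀ (by positivity)]
    nlinarith [measureReal_nonneg (μ := μ) (s := X)]
  calc ∫ x in X, p.eval x ∂μ ≤ ∫ x in X, (g x + η) ∂μ :=
        setIntegral_mono_on
          ((MvPolynomial.continuous_eval p).continuousOn.integrableOn_compact hX)
          (hg_int.add (integrable_const η)) hX.measurableSet fun x hx ↦ (hp x hx).2
    _ = ∫ x in X, g x ∂μ + η * μ.real X := by
        rw [integral_add hg_int (integrable_const η)]
        simp [mul_comm]
    _ ≤ μ.real (S ∩ X) + ε := by
        rw [measureReal_restrict_apply hS.measurableSet] at hg_le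
        linarith

theorem setIntegral_abs_sub_indicator_of_indicator_le {E : Type*} [MeasurableSpace E]
    {μ : Measure E} {X S : Set E} {f : E → ℝ} (hX : MeasurableSet X) (hS : MeasurableSet S)
    (hμX : μ X ≠ ∞) (hf : IntegrableOn f X μ)
    (hSf : ∀ x ∈ X, S.indicator (fun _ ↦ (1 : ℝ)) x ≤ f x) :
    ∫ x in X, |f x - S.indicator (fun _ ↦ (1 : ℝ)) x| ∂μ = ∫ x in X, f x ∂μ - μ.real (S ∩ X) := by
  have : IsFiniteMeasure (μ.restrict X) := isFiniteMeasure_restrict.2 hμX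
  rw [setIntegral_congr_fun hX fun x hx ↦ abs_of_nonneg (sub_nonneg.mpr (hSf x hx)),
    integral_sub hf ((integrable_const 1).indicator hS), integral_indicator hS,
    setIntegral_const, smul_eq_mul, mul_one, measureReal_restrict_apply hS]

theorem poly_approx_indicator_general (n : ℕ)
    (X : Set (Fin n → ℝ)) (hX : IsCompact X)
    (S : Set (Fin n → ℝ)) (hS : IsClosed S) :
    ∃ w : ℕ → (Fin n → ℝ) → ℝ,
      (∀ k, ∃ p : MvPolynomial (Fin n) ℝ, ∀ x, w k x = MvPolynomial.eval x p) ∧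
      (∀ k, ∀ x ∈ X, Set.indicator S (fun _ => (1 : ℝ)) x ≤ w k x) ∧
      Tendsto (fun k => ∫ x in X, |w k x - Set.indicator S (fun _ => (1 : ℝ)) x|)
        atTop (𝓝 0) := by
  choose p hSp hp using fun k : ℕ ↦
    exists_mvPolynomial_indicator_le_setIntegral_le volume hX hS (Nat.one_div_pos_of_nat (n := k))
  refine ⟨fun k x ↦ (p k).eval x, fun k ↦ ⟨p k, fun _ ↦ rfl⟩, hSp, ?_⟩
  refine squeeze_zero (fun k ↦ integral_nonneg fun _ ↦ abs_nonneg _) (fun k ↦ ?_)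
    tendsto_one_div_add_atTop_nhds_zero_nat
  rw [setIntegral_abs_sub_indicator_of_indicator_le hX.measurableSet hS.measurableSet
    hX.measure_lt_top.ne ((MvPolynomial.continuous_eval _).continuousOn.integrableOn_compact hX)
    (hSp k)]
  linarith [hp k]

/-- Polynomial upper approximation of the indicator function of a closed subset `S` of a
compact set `X` in `L¹(X)` norm: there is a sequence of polynomials `w_k ≥ 1_S` on `X`
with `∫_X |w_k − 1_S| dλ → 0`. -/
theorem poly_approx_indicator (n : ℕ) (hn : 1 ≤ n)
    (X : Set (Fin n → ℝ)) (hX : IsCompact X)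
    (S : Set (Fin n → ℝ)) (hSX : S ⊆ X) (hS : IsClosed S) :
    ∃ w : ℕ → (Fin n → ℝ) → ℝ,
      (∀ k, ∃ p : MvPolynomial (Fin n) ℝ, ∀ x, w k x = MvPolynomial.eval x p) ∧
      (∀ k, ∀ x ∈ X, Set.indicator S (fun _ => (1 : ℝ)) x ≤ w k x) ∧
      Tendsto (fun k => ∫ x in X, |w k x - Set.indicator S (fun _ => (1 : ℝ)) x|)
        atTop (𝓝 0) :=
  poly_approx_indicator_general n X hX S hS
end
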